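/- arXiv:0907.2051 — 4 statements merged into one kernel-verified Lean document; each statement's English description precedes it below -/
import Mathlib

section
/- There is an absolute constant C such that for any nonempty finite subsets B₁, B₂ of F_p, there exist at most C · min{|B₁+B₂|/|B₂|, |B₁−B₂|/|B₂|} translates of B₂ whose union covers at least 99% of the elements of B₁ (i.e., a subset of B₁ of size at least 0.99|B₁|). -/
open Finset Pointwise
open scoped Combinatorics.Additive

/-!
By Cauchy–Schwarz, `#U ^ 2 * #B ^ 2 ≤ #(U ± B) * E[U, B]`, while
`E[U, B] = ∑ a, #(U ∩ (a + B)) ^ 2 ≤ (max_a #(U ∩ (a + B))) * #U * #B`. Hence for every `U ⊆ B₁`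
some translate of `B₂` covers at least `#U / k` points of `U`, where
`k = min (#(B₁ + B₂), #(B₁ - B₂)) / #B₂`. Removing such translates greedily while more than `1%`
of `B₁` is uncovered removes at least `#B₁ / (100 k)` new points at each step, so at most `100 k`
translates are used.
-/

namespace Finset

lemma exists_card_sdiff_biUnion_le {α ι : Type*} [DecidableEq α] [DecidableEq ι]
    (F : ι → Finset α) {m δ : ℝ} (hδ : 0 < δ) (U : Finset α)
    (h : ∀ V ⊆ U, m < #V → ∃ i, δ ≤ #(V ∩ F i)) :
    ∃ T : Finset ι, (#(U \ T.biUnion F) : ℝ) ≤ m ∧ #T * δ ≤ #U := by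
  induction U using Finset.strongInduction with
  | H U ih =>
  by_cases hU : (#U : ℝ) ≤ m
  · exact ⟨∅, by simpa using hU, by simp⟩
  obtain ⟨i, hi⟩ := h U subset_rfl (not_le.mp hU)
  have hssub : U \ F i ⊂ U := by
    have hmeet : (U ∩ F i).Nonempty := card_pos.mp (by exact_mod_cast hδ.trans_le hi)
    rw [← sdiff_inter_self_left]
    exact sdiff_ssubset inter_subset_left hmeet
  obtain ⟨T, hT, hTcard⟩ := ih _ hssub fun V hV => h V (hV.trans hssub.subset)
  refine ⟨insert i T, ?_, ?_⟩
  · rwa [biUnion_insert, ← sup_eq_union, ← sdiff_sdiff_left]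
  · have hsplit := card_sdiff_add_card_inter U (F i)
    have hins : (#(insert i T) : ℝ) ≤ #T + 1 := by exact_mod_cast card_insert_le i T
    calc (#(insert i T) : ℝ) * δ ≤ (#T + 1) * δ := by gcongr
      _ ≤ #(U \ F i) + #(U ∩ F i) := by linarith
      _ = #U := by exact_mod_cast hsplit

section AddCommGroup

variable {G : Type*} [AddCommGroup G] [DecidableEq G]

lemma addEnergy_neg_right (s t : Finset G) : E[s, -t] = E[s, t] := by
  refine card_nbij' (fun x => (x.1, -x.2.2, -x.2.1)) (fun x => (x.1, -x.2.2, -x.2.1))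
    ?_ ?_ (fun _ _ => by simp) (fun _ _ => by simp)
  all_goals
    rintro ⟨⟨a₁, a₂⟩, b₁, b₂⟩ hx
    simp only [coe_filter, mem_product, mem_neg', neg_neg, Set.mem_ofPred_eq] at hx ⊢
    refine ⟨⟨hx.1.1, hx.1.2.2, hx.1.2.1⟩, ?_⟩
    rw [← sub_eq_add_neg, ← sub_eq_add_neg, sub_eq_sub_iff_add_eq_add]
    exact hx.2

lemma le_card_sub_mul_addEnergy (s t : Finset G) : #s ^ 2 * #t ^ 2 ≤ #(s - t) * E[s, t] := by
  simpa [card_neg, ← sub_eq_add_neg, addEnergy_neg_right] using le_card_add_mul_addEnergy s (-t)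

lemma card_filter_add_neg_eq_card_inter (s t : Finset G) (a : G) :
    #{xy ∈ s ×ˢ (-t) | xy.1 + xy.2 = a} = #(s ∩ t.image (a + ·)) := by
  refine card_nbij' Prod.fst (fun x => (x, a - x)) ?_ ?_ ?_ (fun _ _ => rfl)
  · rintro ⟨x, y⟩ hxy
    simp only [coe_filter, mem_product, mem_neg', Set.mem_ofPred_eq] at hxy
    simp only [coe_inter, coe_image, Set.mem_inter_iff, mem_coe, Set.mem_image]
    exact ⟨hxy.1.1, -y, hxy.1.2, by rw [← hxy.2]; abel⟩
  · rintro x hx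
    simp only [coe_inter, coe_image, Set.mem_inter_iff, mem_coe, Set.mem_image] at hx
    obtain ⟨hxs, b, hb, rfl⟩ := hx
    simp [hxs, hb]
  · rintro ⟨x, y⟩ hxy
    simp only [coe_filter, Set.mem_ofPred_eq] at hxy
    simp [← hxy.2]

lemma addEnergy_eq_sum_sq_card_inter (s t : Finset G) :
    E[s, t] = ∑ a ∈ s - t, #(s ∩ t.image (a + ·)) ^ 2 := by
  simp_rw [← addEnergy_neg_right s t, addEnergy_eq_sum_sq', sub_eq_add_neg,
    card_filter_add_neg_eq_card_inter]

lemma sum_card_inter_image_add (s t : Finset G) :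
    ∑ a ∈ s - t, #(s ∩ t.image (a + ·)) = #s * #t := by
  rw [← card_neg t, ← card_product, card_eq_sum_card_fiberwise (f := fun xy => xy.1 + xy.2)
    (t := s - t) fun xy hxy => ?_]
  · simp_rw [card_filter_add_neg_eq_card_inter]
  · rw [mem_coe, mem_product] at hxy
    rw [sub_eq_add_neg]
    exact add_mem_add hxy.1 hxy.2

lemma exists_addEnergy_le_card_inter_mul (s t : Finset G) (hs : s.Nonempty) (ht : t.Nonempty) :
    ∃ a, E[s, t] ≤ #(s ∩ t.image (a + ·)) * (#s * #t) := by
  obtain ⟨a, -, hmax⟩ := exists_max_image (s - t) (fun a => #(s ∩ t.image (a + ·))) (hs.sub ht)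
  refine ⟨a, ?_⟩
  rw [addEnergy_eq_sum_sq_card_inter, ← sum_card_inter_image_add, mul_sum]
  exact sum_le_sum fun b hb => by rw [sq]; exact Nat.mul_le_mul_right _ (hmax b hb)

lemma exists_card_mul_card_le_card_inter (s t : Finset G) (hs : s.Nonempty) (ht : t.Nonempty) :
    ∃ a, #s * #t ≤ #(s + t) * #(s ∩ t.image (a + ·)) ∧
      #s * #t ≤ #(s - t) * #(s ∩ t.image (a + ·)) := by
  obtain ⟨a, ha⟩ := exists_addEnergy_le_card_inter_mul s t hs ht
  have hpos : 0 < #s * #t := Nat.mul_pos hs.card_pos ht.card_pos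
  have of_energy_bound (u : ℕ) (hu : #s ^ 2 * #t ^ 2 ≤ u * E[s, t]) :
      #s * #t ≤ u * #(s ∩ t.image (a + ·)) :=
    Nat.le_of_mul_le_mul_right (c := #s * #t) (by
      calc #s * #t * (#s * #t) = #s ^ 2 * #t ^ 2 := by ring
        _ ≤ u * E[s, t] := hu
        _ ≤ u * (#(s ∩ t.image (a + ·)) * (#s * #t)) := Nat.mul_le_mul_left _ ha
        _ = _ := by ring) hpos
  exact ⟨a, of_energy_bound _ (le_card_add_mul_addEnergy s t),
    of_energy_bound _ (le_card_sub_mul_addEnergy s t)⟩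

lemma exists_card_le_min_mul_card_inter {s₁ s t : Finset G} (hs : s ⊆ s₁) (hsne : s.Nonempty)
    (ht : t.Nonempty) : ∃ a, (#s : ℝ) ≤
      min ((#(s₁ + t) : ℝ) / #t) ((#(s₁ - t) : ℝ) / #t) * #(s ∩ t.image (a + ·)) := by
  obtain ⟨a, hadd, hsub⟩ := exists_card_mul_card_le_card_inter s t hsne ht
  have ht0 : (0 : ℝ) < #t := by exact_mod_cast ht.card_pos
  have bound (u : ℕ) (h : #s * #t ≤ u * #(s ∩ t.image (a + ·))) :
      (#s : ℝ) ≤ u / #t * #(s ∩ t.image (a + ·)) := by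
    rw [div_mul_eq_mul_div, le_div_iff₀ ht0]
    exact_mod_cast h
  refine ⟨a, ?_⟩
  rw [min_mul_of_nonneg _ _ (by positivity)]
  exact le_min
    (bound _ (hadd.trans (Nat.mul_le_mul_right _ (card_le_card (add_subset_add_right hs)))))
    (bound _ (hsub.trans (Nat.mul_le_mul_right _ (card_le_card (sub_subset_sub_right hs)))))

end AddCommGroup

end Finset

theorem cover_lemma :
    ∃ C : ℝ, 0 < C ∧ ∀ (p : ℕ), p.Prime → ∀ (B₁ B₂ : Finset (ZMod p)),
      B₁.Nonempty → B₂.Nonempty →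
      ∃ T : Finset (ZMod p),
        (T.card : ℝ) ≤
          C * min (((B₁ + B₂).card : ℝ) / (B₂.card : ℝ)) (((B₁ - B₂).card : ℝ) / (B₂.card : ℝ)) ∧
        ∃ S ⊆ B₁, (0.99 : ℝ) * (B₁.card : ℝ) ≤ (S.card : ℝ) ∧
          S ⊆ T.biUnion (fun t => B₂.image (t + ·)) := by
  refine ⟨100, by norm_num, fun p _ B₁ B₂ h₁ h₂ => ?_⟩
  set k := min ((#(B₁ + B₂) : ℝ) / #B₂) ((#(B₁ - B₂) : ℝ) / #B₂)
  have hB₁ : (0 : ℝ) < #B₁ := by exact_mod_cast h₁.card_pos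
  have hk : 0 < k := by
    have := (h₁.add h₂).card_pos; have := (h₁.sub h₂).card_pos; have := h₂.card_pos
    exact lt_min (by positivity) (by positivity)
  have hgood : ∀ V ⊆ B₁, 0.01 * (#B₁ : ℝ) < #V →
      ∃ a, 0.01 * #B₁ / k ≤ #(V ∩ B₂.image (a + ·)) := by
    intro V hV hlarge
    have hV₀ : V.Nonempty := by
      rw [← card_pos]
      exact_mod_cast (by positivity : (0 : ℝ) ≤ 0.01 * #B₁).trans_lt hlarge
    obtain ⟨a, ha⟩ := exists_card_le_min_mul_card_inter hV hV₀ h₂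
    exact ⟨a, by rw [div_le_iff₀' hk]; linarith⟩
  obtain ⟨T, hW, hT⟩ := exists_card_sdiff_biUnion_le _ (by positivity) B₁ hgood
  set cover := T.biUnion fun t => B₂.image (t + ·)
  refine ⟨T, ?_, B₁ ∩ cover, inter_subset_left, ?_, inter_subset_right⟩
  · rw [mul_div_assoc', div_le_iff₀ hk] at hT
    nlinarith
  · have hsplit : (#(B₁ ∩ cover) : ℝ) + #(B₁ \ cover) = #B₁ := by
      exact_mod_cast card_inter_add_card_sdiff B₁ cover
    linarith
end

section
/- For every k ≥ 1 and ε ∈ (0,1) there is a constant C_{k,ε} such that: for any nonempty finite subsets B₀, B₁, …, B_k of F_p, there exists X ⊆ B₀ with |X| ≥ (1−ε)|B₀| and |X + B₁ + B₂ + ⋯ + B_k| ≤ C_{k,ε} · (∏_{i=1}^k |B_i + B₀|/|B₀|) · |X|. -/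
/-!
Petridis' argument gives Plünnecke's inequality for a single summand on a nonempty subset: if
`U ⊆ A` minimises `|U + D| / |U|`, then `|U + n • D| |A|ⁿ ≤ |A + D|ⁿ |U|`. Distinct summands
`B₁, …, B_k` are reduced to a single one by lifting to `G × ℤ^k`, with `A` placed as `A × {0}`:
`B_i` becomes `B_i × J_i` with `J_i` a progression of length `m_i` along the `i`-th axis, and
`D := ⋃ B_i × J_i`. Then `U = X × {0}` and `U + k • D` contains `(X + ∑ B_i) × ∑ J_i`, a set of
size `|X + ∑ B_i| ∏ m_i`, while `|A + D| ≤ ∑ |A + B_i| m_i`. Choosing `m_i ≈ M / |A + B_i|` makes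
all the products `|A + B_i| m_i` equal up to a factor `2`, which gives a nonempty `X ⊆ A` with
`|X + ∑ B_i| ≤ (2k)^k ∏ (|A + B_i| / |A|) |X|`.

To keep most of `B₀`, apply this to what is left of `B₀` after removing the pieces already
found, as long as more than `ε |B₀|` elements remain; each ratio `|A + B_i| / |A|` then exceeds
`|B₀ + B_i| / |B₀|` by at most a factor `1 / ε`. The union of the disjoint pieces is `X`.
-/

open Finset Pointwise

lemma exists_pos_nat_pow_sum_mul_le_prod_mul {ι : Type*} [Fintype ι] (b : ι → ℝ)
    (hb : ∀ i, 0 < b i) :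
    ∃ m : ι → ℕ, (∀ i, 0 < m i) ∧ (∑ i, b i * m i) ^ Fintype.card ι ≤
      (2 * Fintype.card ι) ^ Fintype.card ι * ∏ i, b i * m i := by
  set M := ∑ i, b i
  have hbM : ∀ i, b i ≤ M := fun i ↦ single_le_sum (fun j _ ↦ (hb j).le) (mem_univ i)
  have hM : 0 ≤ M := sum_nonneg fun i _ ↦ (hb i).le
  refine ⟨fun i ↦ ⌈M / b i⌉₊,
    fun i ↦ Nat.ceil_pos.2 (div_pos ((hb i).trans_le (hbM i)) (hb i)), ?_⟩
  have hM_le : ∀ i, M ≤ b i * ⌈M / b i⌉₊ := fun i ↦ by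
    rw [← div_le_iff₀' (hb i)]
    exact Nat.le_ceil _
  have hle_two_M : ∀ i, b i * ⌈M / b i⌉₊ ≤ 2 * M := fun i ↦ by
    calc b i * ⌈M / b i⌉₊ ≤ b i * (M / b i + 1) :=
          mul_le_mul_of_nonneg_left (Nat.ceil_lt_add_one (div_nonneg hM (hb i).le)).le (hb i).le
      _ = M + b i := by rw [mul_add, mul_div_cancel₀ _ (hb i).ne', mul_one]
      _ ≤ 2 * M := by linarith [hbM i]
  calc (∑ i, b i * ⌈M / b i⌉₊) ^ Fintype.card ι
      ≤ (Fintype.card ι * (2 * M)) ^ Fintype.card ι := by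
        gcongr
        · exact sum_nonneg fun i _ ↦ hM.trans (hM_le i)
        · simpa using sum_le_card_nsmul univ _ _ fun i _ ↦ hle_two_M i
    _ = (2 * Fintype.card ι) ^ Fintype.card ι * ∏ _i : ι, M := by
        rw [prod_const, card_univ]
        ring
    _ ≤ (2 * Fintype.card ι) ^ Fintype.card ι * ∏ i, b i * ⌈M / b i⌉₊ := by
        gcongr with i
        exact hM_le i

namespace Finset

section AddCommMonoid

variable {ι G H : Type*} [AddCommMonoid G] [DecidableEq G] [AddCommMonoid H] [DecidableEq H]

lemma sum_mem_sum {s : Finset ι} {f : ι → Finset G} {g : ι → G} (hg : ∀ i ∈ s, g i ∈ f i) :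
    ∑ i ∈ s, g i ∈ ∑ i ∈ s, f i := by
  rw [← mem_coe, coe_sum]
  exact Set.finsetSum_mem_finsetSum s _ g hg

lemma sum_product_comm (s : Finset ι) (f : ι → Finset G) (g : ι → Finset H) :
    ∑ i ∈ s, f i ×ˢ g i = (∑ i ∈ s, f i) ×ˢ ∑ i ∈ s, g i := by
  induction s using Finset.cons_induction with
  | empty => simp
  | cons a s ha ih => rw [sum_cons, sum_cons, sum_cons, ih, product_add_product_comm]

lemma piFinset_subset_sum_image_single [Fintype ι] [DecidableEq ι] (S : ι → Finset G) :
    Fintype.piFinset S ⊆ ∑ i, (S i).image (Pi.single i) := by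
  intro a ha
  rw [← univ_sum_single a]
  exact sum_mem_sum fun i _ ↦ mem_image_of_mem _ (Fintype.mem_piFinset.1 ha i)

end AddCommMonoid

section Add

variable {ι G : Type*} [Add G] [DecidableEq G]

lemma card_add_biUnion_le (A : Finset G) (s : Finset ι) (B : ι → Finset G) :
    #(A + s.biUnion B) ≤ ∑ i ∈ s, #(A + B i) := by
  classical
  refine (card_le_card ?_).trans card_biUnion_le
  intro x hx
  obtain ⟨a, ha, b, hb, rfl⟩ := mem_add.1 hx
  obtain ⟨i, hi, hbi⟩ := mem_biUnion.1 hb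
  exact mem_biUnion.2 ⟨i, hi, add_mem_add ha hbi⟩

lemma card_union_add_le_of_disjoint {X Y S : Finset G} {c : ℝ} (hXY : Disjoint X Y)
    (hX : (#(X + S) : ℝ) ≤ c * #X) (hY : (#(Y + S) : ℝ) ≤ c * #Y) :
    (#((X ∪ Y) + S) : ℝ) ≤ c * #(X ∪ Y) := by
  rw [union_add, card_union_of_disjoint hXY, Nat.cast_add, mul_add]
  exact (Nat.cast_le.2 (card_union_le _ _)).trans (by push_cast; linarith)

lemma card_add_div_card_le_of_subset {A A₀ S : Finset G} (hAA₀ : A ⊆ A₀) (hA₀ : A₀.Nonempty)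
    {ε : ℝ} (hε : 0 < ε) (hA : ε * #A₀ ≤ #A) :
    (#(S + A) : ℝ) / #A ≤ (#(S + A₀) : ℝ) / #A₀ / ε := by
  have hA₀ : (0 : ℝ) < #A₀ := by simpa using hA₀.card_pos
  have hA : (0 : ℝ) < #A := (by positivity : 0 < ε * #A₀).trans_le hA
  rw [div_div, div_le_div_iff₀ hA (by positivity)]
  exact mul_le_mul (by exact_mod_cast card_le_card (add_subset_add_left hAA₀)) (by linarith)
    (by positivity) (by positivity)

end Add

section AddCommGroup

variable {ι G : Type*} [AddCommGroup G] [DecidableEq G]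

lemma exists_subset_card_add_mul_le (A B : Finset G) (hA : A.Nonempty) :
    ∃ U ⊆ A, U.Nonempty ∧ ∀ V ⊆ A, #(U + B) * #V ≤ #(V + B) * #U := by
  obtain ⟨U, hU, hUmin⟩ := exists_min_image (A.powerset.filter Finset.Nonempty)
    (fun V ↦ (#(V + B) : ℚ≥0) / #V) ⟨A, mem_filter.2 ⟨mem_powerset_self A, hA⟩⟩
  obtain ⟨hUA, hU⟩ := mem_filter.1 hU
  refine ⟨U, mem_powerset.1 hUA, hU, fun V hVA ↦ ?_⟩
  obtain rfl | hV := V.eq_empty_or_nonempty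
  · simp
  have := hUmin V (mem_filter.2 ⟨mem_powerset.2 hVA, hV⟩)
  rw [div_le_div_iff₀ (by simpa using hU.card_pos) (by simpa using hV.card_pos)] at this
  exact_mod_cast this

lemma card_add_nsmul_mul_pow_le {A B U : Finset G} (hUA : U ⊆ A) (hU : U.Nonempty)
    (hmin : ∀ V ⊆ A, #(U + B) * #V ≤ #(V + B) * #U) (n : ℕ) :
    #(U + n • B) * #A ^ n ≤ #(A + B) ^ n * #U := by
  induction n with
  | zero => simp
  | succ n ih =>
    have hpetridis : #(U + (n + 1) • B) * #U ≤ #(U + B) * #(U + n • B) := by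
      rw [succ_nsmul, ← add_assoc, add_comm U]
      exact pluennecke_petridis_inequality_add _ fun V hV ↦ hmin V (hV.trans hUA)
    refine Nat.le_of_mul_le_mul_right ?_ hU.card_pos
    calc #(U + (n + 1) • B) * #A ^ (n + 1) * #U
        = #(U + (n + 1) • B) * #U * (#A * #A ^ n) := by ring
      _ ≤ #(U + B) * #(U + n • B) * (#A * #A ^ n) := by gcongr
      _ = #(U + B) * #A * (#(U + n • B) * #A ^ n) := by ring
      _ ≤ #(A + B) * #U * (#(A + B) ^ n * #U) := Nat.mul_le_mul (hmin A subset_rfl) ih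
      _ = #(A + B) ^ (n + 1) * #U * #U := by ring

theorem exists_subset_card_add_nsmul_mul_pow_le (A B : Finset G) (hA : A.Nonempty) :
    ∃ U ⊆ A, U.Nonempty ∧ ∀ n : ℕ, #(U + n • B) * #A ^ n ≤ #(A + B) ^ n * #U := by
  obtain ⟨U, hUA, hU, hmin⟩ := exists_subset_card_add_mul_le A B hA
  exact ⟨U, hUA, hU, card_add_nsmul_mul_pow_le hUA hU hmin⟩

theorem exists_subset_card_add_sum_mul_prod_le [Fintype ι] (A : Finset G) (hA : A.Nonempty)
    (B : ι → Finset G) (m : ι → ℕ) :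
    ∃ X ⊆ A, X.Nonempty ∧ #(X + ∑ i, B i) * (∏ i, m i) * #A ^ Fintype.card ι ≤
      (∑ i, #(A + B i) * m i) ^ Fintype.card ι * #X := by
  classical
  set n := Fintype.card ι
  set J : ι → Finset (ι → ℤ) := fun i ↦ ((range (m i)).map Nat.castEmbedding).image (Pi.single i)
  set D := univ.biUnion fun i ↦ B i ×ˢ J i
  have hJ : ∏ i, m i ≤ #(∑ i, J i) := by
    simpa [Fintype.card_piFinset] using card_le_card <|
      piFinset_subset_sum_image_single fun i ↦ (range (m i)).map Nat.castEmbedding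
  have hAD : #(A ×ˢ {0} + D) ≤ ∑ i, #(A + B i) * m i := by
    refine (card_add_biUnion_le _ _ _).trans (sum_le_sum fun i _ ↦ ?_)
    rw [product_add_product_comm, singleton_zero, zero_add, card_product]
    gcongr
    exact card_image_le.trans (by simp)
  obtain ⟨U, hUA, hU, hUD⟩ :=
    exists_subset_card_add_nsmul_mul_pow_le (A ×ˢ {0}) D (hA.product (singleton_nonempty 0))
  rw [product_singleton, subset_map_iff] at hUA
  obtain ⟨X, hXA, rfl⟩ := hUA
  have hXD : (X + ∑ i, B i) ×ˢ ∑ i, J i ⊆ X ×ˢ {0} + n • D := by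
    rw [← zero_add (∑ i, J i), ← singleton_zero, ← product_add_product_comm, ← sum_product_comm,
      show n • D = ∑ _i : ι, D by rw [sum_const, card_univ]]
    exact add_subset_add_left <| sum_le_sum fun i hi ↦ subset_biUnion_of_mem (fun i ↦ B i ×ˢ J i) hi
  have hUD := hUD n
  rw [← product_singleton, card_product, card_product, card_singleton, mul_one, mul_one] at hUD
  refine ⟨X, hXA, map_nonempty.1 hU, ?_⟩
  calc #(X + ∑ i, B i) * (∏ i, m i) * #A ^ n
      ≤ #((X + ∑ i, B i) ×ˢ ∑ i, J i) * #A ^ n := by rw [card_product]; gcongr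
    _ ≤ #(X ×ˢ {0} + n • D) * #A ^ n := by gcongr
    _ ≤ #(A ×ˢ {0} + D) ^ n * #X := hUD
    _ ≤ (∑ i, #(A + B i) * m i) ^ n * #X := by gcongr

theorem exists_subset_card_add_sum_le [Fintype ι] (A : Finset G) (hA : A.Nonempty)
    (B : ι → Finset G) (hB : ∀ i, (B i).Nonempty) :
    ∃ X ⊆ A, X.Nonempty ∧ (#(X + ∑ i, B i) : ℝ) ≤
      (2 * Fintype.card ι) ^ Fintype.card ι * (∏ i, (#(A + B i) : ℝ) / #A) * #X := by
  obtain ⟨m, hm, hbm⟩ := exists_pos_nat_pow_sum_mul_le_prod_mul (fun i ↦ (#(A + B i) : ℝ))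
    fun i ↦ by simpa using (hA.add (hB i)).card_pos
  obtain ⟨X, hXA, hX, hXB⟩ := exists_subset_card_add_sum_mul_prod_le A hA B m
  have hA₀ : (#A : ℝ) ≠ 0 := by simpa using hA.ne_empty
  have hmA : (0 : ℝ) < (∏ i, (m i : ℝ)) * #A ^ Fintype.card ι :=
    mul_pos (prod_pos fun i _ ↦ by exact_mod_cast hm i) (pow_pos (by positivity) _)
  refine ⟨X, hXA, hX, le_of_mul_le_mul_right ?_ hmA⟩
  calc (#(X + ∑ i, B i) : ℝ) * ((∏ i, (m i : ℝ)) * #A ^ Fintype.card ι)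
      ≤ (∑ i, (#(A + B i) : ℝ) * m i) ^ Fintype.card ι * #X := by
        rw [← mul_assoc]
        exact_mod_cast hXB
    _ ≤ (2 * Fintype.card ι) ^ Fintype.card ι * (∏ i, (#(A + B i) : ℝ) * m i) * #X := by
        gcongr
    _ = (2 * Fintype.card ι) ^ Fintype.card ι * (∏ i, (#(A + B i) : ℝ) / #A) * #X *
          ((∏ i, (m i : ℝ)) * #A ^ Fintype.card ι) := by
        simp only [prod_mul_distrib, prod_div_distrib, prod_const, card_univ]
        field_simp

theorem exists_subset_card_add_sum_le_of_subset [Fintype ι] {A A₀ : Finset G} (hAA₀ : A ⊆ A₀)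
    (hA₀ : A₀.Nonempty) {ε : ℝ} (hε : 0 < ε) (hA : ε * #A₀ < #A) (B : ι → Finset G)
    (hB : ∀ i, (B i).Nonempty) :
    ∃ X ⊆ A, X.Nonempty ∧ (#(X + ∑ i, B i) : ℝ) ≤ (2 * Fintype.card ι) ^ Fintype.card ι /
      ε ^ Fintype.card ι * (∏ i, (#(B i + A₀) : ℝ) / #A₀) * #X := by
  have hA' : A.Nonempty := by
    rw [← card_pos, ← Nat.cast_pos (α := ℝ)]
    exact (by positivity : 0 ≤ ε * #A₀).trans_lt hA
  obtain ⟨X, hXA, hX, hXB⟩ := exists_subset_card_add_sum_le A hA' B hB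
  have hratio : ∏ i, (#(A + B i) : ℝ) / #A ≤ (∏ i, (#(B i + A₀) : ℝ) / #A₀) / ε ^ Fintype.card ι :=
    calc _ ≤ ∏ i, (#(B i + A₀) : ℝ) / #A₀ / ε := by
          refine prod_le_prod (fun i _ ↦ by positivity) fun i _ ↦ ?_
          rw [add_comm A]
          exact card_add_div_card_le_of_subset hAA₀ hA₀ hε hA.le
      _ = _ := by rw [prod_div_distrib, prod_const, card_univ]
  refine ⟨X, hXA, hX, hXB.trans ?_⟩
  calc (2 * Fintype.card ι) ^ Fintype.card ι * (∏ i, (#(A + B i) : ℝ) / #A) * #X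
      ≤ (2 * Fintype.card ι) ^ Fintype.card ι *
          ((∏ i, (#(B i + A₀) : ℝ) / #A₀) / ε ^ Fintype.card ι) * #X := by gcongr
    _ = _ := by ring

end AddCommGroup

theorem exists_subset_card_sub_le_of_exhaust {α : Type*} [DecidableEq α]
    {P : Finset α → Prop} (h_empty : P ∅)
    (h_union : ∀ X Y, Disjoint X Y → P X → P Y → P (X ∪ Y)) (δ : ℝ) (A : Finset α)
    (h : ∀ A' ⊆ A, δ < #A' → ∃ X ⊆ A', X.Nonempty ∧ P X) :
    ∃ X ⊆ A, (#A : ℝ) - δ ≤ #X ∧ P X := by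
  induction A using Finset.strongInduction with
  | H A ih =>
    by_cases hA : (#A : ℝ) ≤ δ
    · exact ⟨∅, empty_subset A, by simpa using hA, h_empty⟩
    obtain ⟨X₀, hX₀A, hX₀, hPX₀⟩ := h A subset_rfl (not_le.1 hA)
    obtain ⟨X₁, hX₁, hcard, hPX₁⟩ := ih (A \ X₀) (sdiff_ssubset hX₀A hX₀)
      fun A' hA' ↦ h A' (hA'.trans sdiff_subset)
    have hdisj : Disjoint X₀ X₁ := disjoint_of_subset_right hX₁ disjoint_sdiff
    refine ⟨X₀ ∪ X₁, union_subset hX₀A (hX₁.trans sdiff_subset), ?_,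
      h_union X₀ X₁ hdisj hPX₀ hPX₁⟩
    rw [card_sdiff_of_subset hX₀A, Nat.cast_sub (card_le_card hX₀A)] at hcard
    rw [card_union_of_disjoint hdisj, Nat.cast_add]
    linarith

end Finset

theorem plunnecke_ruzsa_refined_general (k : ℕ) (ε : ℝ) (hε0 : 0 < ε) :
    ∃ C : ℝ, 0 < C ∧ ∀ (p : ℕ), p.Prime →
      ∀ (B₀ : Finset (ZMod p)) (B : Fin k → Finset (ZMod p)),
        B₀.Nonempty → (∀ i, (B i).Nonempty) →
        ∃ X ⊆ B₀, (1 - ε) * (B₀.card : ℝ) ≤ (X.card : ℝ) ∧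
          (((X + ∑ i, B i).card : ℝ)) ≤
            C * (∏ i, (((B i + B₀).card : ℝ) / (B₀.card : ℝ))) * (X.card : ℝ) := by
  have h2k : (0 : ℝ) < (2 * k) ^ k := by
    rcases k.eq_zero_or_pos with rfl | hk
    · simp
    · positivity
  refine ⟨(2 * k) ^ k / ε ^ k, by positivity, fun p _ B₀ B hB₀ hB ↦ ?_⟩
  obtain ⟨X, hXB₀, hX, hXB⟩ := exists_subset_card_sub_le_of_exhaust (P := fun X ↦
      (#(X + ∑ i, B i) : ℝ) ≤ (2 * k) ^ k / ε ^ k * (∏ i, (#(B i + B₀) : ℝ) / #B₀) * #X)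
    (by simp) (fun X Y hXY ↦ card_union_add_le_of_disjoint hXY) (ε * #B₀) B₀
    fun A hAB₀ hA ↦ by simpa using exists_subset_card_add_sum_le_of_subset hAB₀ hB₀ hε0 hA B hB
  exact ⟨X, hXB₀, by linarith, hXB⟩

theorem plunnecke_ruzsa_refined (k : ℕ) (hk : 1 ≤ k) (ε : ℝ) (hε0 : 0 < ε) (hε1 : ε < 1) :
    ∃ C : ℝ, 0 < C ∧ ∀ (p : ℕ), p.Prime →
      ∀ (B₀ : Finset (ZMod p)) (B : Fin k → Finset (ZMod p)),
        B₀.Nonempty → (∀ i, (B i).Nonempty) →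
        ∃ X ⊆ B₀, (1 - ε) * (B₀.card : ℝ) ≤ (X.card : ℝ) ∧
          (((X + ∑ i, B i).card : ℝ)) ≤
            C * (∏ i, (((B i + B₀).card : ℝ) / (B₀.card : ℝ))) * (X.card : ℝ) :=
  plunnecke_ruzsa_refined_general k ε hε0
end

section
/- Let A₁ ⊆ F_p be a finite set with at least two elements such that (A₁−A₁)/(A₁−A₁) ≠ F_p (the set of ratios (a−b)/(c−d) with a,b,c,d ∈ A₁, c ≠ d, is not all of F_p). Then |A₁| ≤ C·p^{1/2} for an absolute constant C. -/
/-! If `r` is not a ratio of differences of `A`, then `a + r b = a' + r b'` forces `b = b'`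
(otherwise `r = (a' - a) / (b - b')`), so `(a, b) ↦ a + r b` embeds `A × A` into `𝔽_p`
and `|A|² ≤ p`. -/

open Finset Pointwise

/-- The set of ratios `(a - b) / (c - d)` with `a, b, c, d ∈ A` and `c ≠ d`. -/
def ratioSet {p : ℕ} [Fact p.Prime] (A : Finset (ZMod p)) : Set (ZMod p) :=
  {x | ∃ a ∈ A, ∃ b ∈ A, ∃ c ∈ A, ∃ d ∈ A, c ≠ d ∧ x = (a - b) / (c - d)}

theorem Set.injOn_add_mul_of_forall_ne_div {K : Type*} [Field K] {A : Set K} {r : K}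
    (hr : ∀ a ∈ A, ∀ b ∈ A, ∀ c ∈ A, ∀ d ∈ A, c ≠ d → r ≠ (a - b) / (c - d)) :
    (A ×ˢ A).InjOn fun q : K × K => q.1 + r * q.2 := by
  rintro ⟨a, b⟩ ⟨ha, hb⟩ ⟨a', b'⟩ ⟨ha', hb'⟩ (h : a + r * b = a' + r * b')
  have hbb' : b = b' := by
    by_contra hne
    refine hr a' ha' a ha b hb b' hb' hne ?_
    rw [eq_div_iff (sub_ne_zero.mpr hne)]
    linear_combination h
  subst hbb'
  simpa using h

theorem Finset.card_sq_le_card_of_forall_ne_div {K : Type*} [Field K] [Fintype K]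
    {A : Finset K} {r : K}
    (hr : ∀ a ∈ A, ∀ b ∈ A, ∀ c ∈ A, ∀ d ∈ A, c ≠ d → r ≠ (a - b) / (c - d)) :
    #A ^ 2 ≤ Fintype.card K := by
  have hinj := Set.injOn_add_mul_of_forall_ne_div (A := (A : Set K)) hr
  rw [← Finset.coe_product] at hinj
  simpa [sq] using card_le_card_of_injOn _ (fun _ _ ↦ mem_univ _) hinj

theorem card_le_sqrt_of_ratioSet_ne_univ {p : ℕ} [Fact p.Prime] {A : Finset (ZMod p)}
    (hA : ratioSet A ≠ Set.univ) : (#A : ℝ) ≤ √p := by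
  obtain ⟨r, hr⟩ := (Set.ne_univ_iff_exists_notMem _).mp hA
  have hcard : #A ^ 2 ≤ p := by
    simpa using card_sq_le_card_of_forall_ne_div fun a ha b hb c hc d hd hcd hr' ↦
      hr ⟨a, ha, b, hb, c, hc, d, hd, hcd, hr'⟩
  exact Real.le_sqrt_of_sq_le (by exact_mod_cast hcard)

theorem small_if_ratio_ne_univ :
    ∃ C : ℝ, 0 < C ∧ ∀ (p : ℕ) [Fact p.Prime], ∀ A₁ : Finset (ZMod p),
      2 ≤ A₁.card → ratioSet A₁ ≠ Set.univ → (A₁.card : ℝ) ≤ C * Real.sqrt p :=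
  ⟨1, one_pos, fun _ _ _ _ hA ↦ by simpa using card_le_sqrt_of_ratioSet_ne_univ hA⟩
end

section
/- For any finite nonempty set A₁ ⊆ F_p with |A₁| ≥ 2, there exists ξ ∈ F_p \ {0} such that the additive energy satisfies E^+(A₁, ξA₁) ≤ |A₁|² + |A₁|⁴/(p−1). -/
open Finset Pointwise

/-- Additive energy of `Y` and `Z`. -/
def paperAddEnergy {p : ℕ} (Y Z : Finset (ZMod p)) : ℕ :=
  ∑ x ∈ Y, ∑ y ∈ Y, ((Z.image (x + ·)) ∩ (Z.image (y + ·))).card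

/-!
Write `E(ξ)` for the number of quadruples `(a, b, c, d) ∈ A⁴` with `a + ξc = b + ξd`; for `ξ ≠ 0`
this is the energy `E⁺(A, ξA)`. Summing over all `ξ ≠ 0`, a quadruple with `a = b` and `c = d`
is counted `p - 1` times, while any other quadruple determines `ξ` and is counted at most once.
Hence `∑_{ξ ≠ 0} E(ξ) ≤ (p - 1)|A|² + |A|⁴`, and some `ξ ≠ 0` is at most the average.
-/

lemma card_inter_image_add_image {G H : Type*} [AddLeftCancelSemigroup G] [DecidableEq G]
    {f : H → G} (hf : Function.Injective f) (A : Finset H) (x y : G) :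
    ((A.image f).image (x + ·) ∩ (A.image f).image (y + ·)).card =
      #{q ∈ A ×ˢ A | x + f q.1 = y + f q.2} := by
  symm
  refine card_bij (fun q _ => x + f q.1) ?_ ?_ ?_
  · rintro ⟨a, b⟩ hq
    simp only [mem_filter, mem_product] at hq
    simp only [mem_inter, mem_image]
    exact ⟨⟨f a, ⟨a, hq.1.1, rfl⟩, rfl⟩, ⟨f b, ⟨b, hq.1.2, rfl⟩, hq.2.symm⟩⟩
  · rintro ⟨a, b⟩ hq ⟨a', b'⟩ hq' h
    simp only [mem_filter, mem_product] at hq hq'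
    have ha : a = a' := hf (add_left_cancel h)
    subst ha
    exact Prod.ext rfl (hf (add_left_cancel (hq.2.symm.trans hq'.2)))
  · intro w hw
    simp only [mem_inter, mem_image] at hw
    obtain ⟨⟨_, ⟨a, ha, rfl⟩, rfl⟩, ⟨_, ⟨b, hb, rfl⟩, hab⟩⟩ := hw
    exact ⟨(a, b), mem_filter.2 ⟨mem_product.2 ⟨ha, hb⟩, hab.symm⟩, rfl⟩

lemma paperAddEnergy_image_eq_card {p : ℕ} {f : ZMod p → ZMod p} (hf : Function.Injective f)
    (A : Finset (ZMod p)) :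
    paperAddEnergy A (A.image f) =
      #{t ∈ (A ×ˢ A) ×ˢ (A ×ˢ A) | t.1.1 + f t.2.1 = t.1.2 + f t.2.2} := by
  simp only [paperAddEnergy, card_inter_image_add_image hf, card_filter, sum_product]

section Collisions

variable {K : Type*} [CommRing K] [NoZeroDivisors K] [DecidableEq K]

lemma card_filter_add_mul_eq_le_one {a b c d : K} (h : ¬(a = b ∧ c = d)) (s : Finset K) :
    #{ξ ∈ s | a + ξ * c = b + ξ * d} ≤ 1 := by
  refine card_le_one.2 fun ξ hξ ξ' hξ' => ?_
  simp only [mem_filter] at hξ hξ'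
  by_cases hcd : c = d
  · subst hcd
    exact absurd ⟨add_right_cancel hξ.2, rfl⟩ h
  · have hz : (ξ - ξ') * (c - d) = 0 := by linear_combination hξ.2 - hξ'.2
    exact sub_eq_zero.1 ((mul_eq_zero.1 hz).resolve_right (sub_ne_zero.2 hcd))

lemma sum_card_filter_add_mul_eq_le (A s : Finset K) :
    ∑ ξ ∈ s, #{t ∈ (A ×ˢ A) ×ˢ (A ×ˢ A) | t.1.1 + ξ * t.2.1 = t.1.2 + ξ * t.2.2} ≤
      #s * #A ^ 2 + #A ^ 4 := by
  set T := (A ×ˢ A) ×ˢ (A ×ˢ A)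
  have hdiag : #{t ∈ T | t.1.1 = t.1.2 ∧ t.2.1 = t.2.2} = #A ^ 2 := by
    rw [filter_product (fun q : K × K => q.1 = q.2) (fun q : K × K => q.1 = q.2), card_product,
      ← diag_eq_filter, diag_card, sq]
  have hterm : ∀ t ∈ T, #{ξ ∈ s | t.1.1 + ξ * t.2.1 = t.1.2 + ξ * t.2.2} ≤
      (if t.1.1 = t.1.2 ∧ t.2.1 = t.2.2 then #s else 0) + 1 := by
    intro t _
    split_ifs with h
    · exact (card_filter_le _ _).trans (Nat.le_add_right _ _)
    · exact card_filter_add_mul_eq_le_one h s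
  calc ∑ ξ ∈ s, #{t ∈ T | t.1.1 + ξ * t.2.1 = t.1.2 + ξ * t.2.2}
      = ∑ t ∈ T, #{ξ ∈ s | t.1.1 + ξ * t.2.1 = t.1.2 + ξ * t.2.2} := by
        simp only [card_filter]
        exact sum_comm
    _ ≤ ∑ t ∈ T, ((if t.1.1 = t.1.2 ∧ t.2.1 = t.2.2 then #s else 0) + 1) := sum_le_sum hterm
    _ = #s * #A ^ 2 + #A ^ 4 := by
        rw [sum_add_distrib, sum_ite, sum_const, sum_const_zero, sum_const, hdiag]
        simp only [T, card_product, smul_eq_mul]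
        ring

end Collisions

theorem exists_good_dilate_general (p : ℕ) (hp : p.Prime) (A₁ : Finset (ZMod p)) :
    ∃ ξ : ZMod p, ξ ≠ 0 ∧
      (paperAddEnergy A₁ (A₁.image (ξ * ·)) : ℝ) ≤
        (A₁.card : ℝ) ^ 2 + (A₁.card : ℝ) ^ 4 / ((p : ℝ) - 1) := by
  have : Fact p.Prime := ⟨hp⟩
  set R : Finset (ZMod p) := univ.erase 0
  have hR : (#R : ℝ) = p - 1 := by
    rw [card_erase_of_mem (mem_univ _), card_univ, ZMod.card, Nat.cast_pred hp.pos]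
  have hR_pos : (0 : ℝ) < p - 1 := by
    have : (1 : ℝ) < p := by exact_mod_cast hp.one_lt
    linarith
  have hsum : ∑ ξ ∈ R, (paperAddEnergy A₁ (A₁.image (ξ * ·)) : ℝ) ≤
      ∑ _ξ ∈ R, ((#A₁ : ℝ) ^ 2 + (#A₁ : ℝ) ^ 4 / ((p : ℝ) - 1)) := by
    rw [sum_const, nsmul_eq_mul, hR, mul_add, mul_div_cancel₀ _ hR_pos.ne', ← hR]
    rw [sum_congr rfl fun ξ hξ => by
      rw [paperAddEnergy_image_eq_card (mul_right_injective₀ (ne_of_mem_erase hξ))]]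
    exact_mod_cast sum_card_filter_add_mul_eq_le A₁ R
  have hR_ne : R.Nonempty := ⟨1, mem_erase.2 ⟨one_ne_zero, mem_univ _⟩⟩
  obtain ⟨ξ, hξ, hle⟩ := exists_le_of_sum_le hR_ne hsum
  exact ⟨ξ, ne_of_mem_erase hξ, hle⟩

theorem exists_good_dilate (p : ℕ) (hp : p.Prime) (A₁ : Finset (ZMod p))
    (h2 : 2 ≤ A₁.card) :
    ∃ ξ : ZMod p, ξ ≠ 0 ∧
      (paperAddEnergy A₁ (A₁.image (ξ * ·)) : ℝ) ≤
        (A₁.card : ℝ) ^ 2 + (A₁.card : ℝ) ^ 4 / ((p : ℝ) - 1) :=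
  exists_good_dilate_general p hp A₁
end
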